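/- One has $\omega_1>0$, where $\omega_1:=-u_*'(r^*)-\psi_1(r^*)$; equivalently, $\psi_1(r^*)<-u_*'(r^*)$. -/

import Mathlib

/-!
Differentiating the radial equation shows that `v = -u_*' > 0` solves the `k = 1` equation on
each side of `r*`, so the Wronskian `W = r (ψ₁' v - ψ₁ v')` is constant on `(0, r*)` and on
`(r*, R)`. Near `0` one has `v = O(r)`, so a nonzero constant would force `|ψ₁'| ≳ 1 / r²`,
which is incompatible with the continuity of `ψ₁` at `0`; hence `W = 0` on `(0, r*)`. At `r*`
both `ψ₁'` and `v'` jump by `-u_*(r*)`, so `W = r* u_*(r*) (ψ₁(r*) - v(r*))` on `(r*, R)`.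
If `ψ₁(r*) ≥ v(r*)`, then `W ≥ 0` there, so `(ψ₁ / v)' = W / (r v²) ≥ 0` on `(r*, R)`
and `ψ₁(r*) / v(r*) ≤ ψ₁(R) / v(R) = 0`, contradicting `ψ₁(r*) ≥ v(r*) > 0`.
-/

open Set

noncomputable section

/-- The radial profile `u_*` of the first Dirichlet eigenfunction of
`-Δ - χ_{B(0,r*)}` on the disc `B(0,R) ⊂ ℝ²`, with derivative `u'` and
eigenvalue `lam`: `u_*` is `C¹` on `[0,R]`, positive on `[0,R)`, satisfies
`-(1/r)(r u')' = (lam + χ_{[0,r*)}) u` on `(0,R)` (away from the interface `r*`),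
`u'(0) = 0`, `u(R) = 0`, and `u' < 0` on `(0,R]`. -/
structure EigenProfile (R rs lam : ℝ) (u u' : ℝ → ℝ) : Prop where
  cont : ContinuousOn u (Icc 0 R)
  deriv : ∀ r ∈ Icc (0 : ℝ) R, HasDerivWithinAt u (u' r) (Icc 0 R) r
  derivCont : ContinuousOn u' (Icc 0 R)
  pos : ∀ r ∈ Ico (0 : ℝ) R, 0 < u r
  ode : ∀ r ∈ Ioo (0 : ℝ) R, r ≠ rs →
    HasDerivAt (fun s => s * u' s)
      (-(r * ((lam + (if r < rs then (1 : ℝ) else 0)) * u r))) r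
  deriv0 : u' 0 = 0
  valR : u R = 0
  derivNeg : ∀ r ∈ Ioc (0 : ℝ) R, u' r < 0

/-- The profile `ψ_k`: continuous on `[0,R]`, `C²` on `(0,r*)` and `(r*,R)`,
satisfying `-(1/r)(r ψ_k')' = (lam + χ_{[0,r*)} - k²/r²) ψ_k` there,
`ψ_k(0) = ψ_k(R) = 0`, and the jump of one-sided derivatives
`ψ_k'(r*⁺) - ψ_k'(r*⁻) = -u(r*)`; `dplus` and `dminus` are the one-sided
derivatives at `r*`. -/
structure PsiProfile (R rs lam : ℝ) (u : ℝ → ℝ) (k : ℕ) (ψ ψ' : ℝ → ℝ)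
    (dplus dminus : ℝ) : Prop where
  cont : ContinuousOn ψ (Icc 0 R)
  deriv : ∀ r ∈ Ioo (0 : ℝ) R, r ≠ rs → HasDerivAt ψ (ψ' r) r
  ode : ∀ r ∈ Ioo (0 : ℝ) R, r ≠ rs →
    HasDerivAt (fun s => s * ψ' s)
      (-(r * ((lam + (if r < rs then (1 : ℝ) else 0) - (k : ℝ) ^ 2 / r ^ 2) * ψ r))) r
  val0 : ψ 0 = 0
  valR : ψ R = 0
  jumpPlus : HasDerivWithinAt ψ dplus (Ioi rs) rs
  jumpMinus : HasDerivWithinAt ψ dminus (Iio rs) rs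
  jump : dplus - dminus = -(u rs)

open Filter Topology

lemma HasDerivAt.of_id_mul {f : ℝ → ℝ} {d r : ℝ} (hr : r ≠ 0)
    (h : HasDerivAt (fun s => s * f s) d r) : HasDerivAt f ((d - f r) / r) r := by
  refine ((h.div (hasDerivAt_id r) hr).congr_of_eventuallyEq ?_).congr_deriv ?_
  · filter_upwards [eventually_ne_nhds hr] with s hs
    simp [hs]
  · simp only [id, mul_one]
    field_simp

def radialWronskian (f f' g g' : ℝ → ℝ) (s : ℝ) : ℝ := s * (f' s * g s - f s * g' s)

lemma hasDerivAt_radialWronskian {f f' g g' : ℝ → ℝ} {q r : ℝ}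
    (hf : HasDerivAt f (f' r) r) (hg : HasDerivAt g (g' r) r)
    (hf' : HasDerivAt (fun s => s * f' s) (-(r * (q * f r))) r)
    (hg' : HasDerivAt (fun s => s * g' s) (-(r * (q * g r))) r) :
    HasDerivAt (radialWronskian f f' g g') 0 r := by
  have hW : radialWronskian f f' g g' = fun s => s * f' s * g s - f s * (s * g' s) := by
    ext s
    simp only [radialWronskian]
    ring
  rw [hW]
  exact ((hf'.mul hg).sub (hf.mul hg')).congr_deriv (by ring)

lemma hasDerivAt_neg_deriv_of_radial {u u' : ℝ → ℝ} {c r : ℝ} (hr : r ≠ 0)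
    (hode : HasDerivAt (fun s => s * u' s) (-(r * (c * u r))) r) :
    HasDerivAt (fun s => -u' s) (c * u r + u' r / r) r :=
  (hode.of_id_mul hr).neg.congr_deriv (by field_simp; ring)

lemma hasDerivAt_mul_deriv_neg_deriv_of_radial {u u' : ℝ → ℝ} {c r : ℝ} (hr : r ≠ 0)
    (hu : HasDerivAt u (u' r) r)
    (hode : HasDerivAt (fun s => s * u' s) (-(r * (c * u r))) r) :
    HasDerivAt (fun s => s * (c * u s + u' s / s)) (-(r * ((c - 1 / r ^ 2) * -u' r))) r := by
  have h := ((hasDerivAt_id r).mul (hu.const_mul c)).add (hode.of_id_mul hr)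
  refine (h.congr_of_eventuallyEq ?_).congr_deriv ?_
  · filter_upwards [eventually_ne_nhds hr] with s hs
    field_simp
    simp [mul_assoc]
  · simp only [id]
    field_simp
    ring

lemma exists_radialWronskian_eq {a b c : ℝ} (ha : 0 ≤ a) {f f' u u' : ℝ → ℝ}
    (hf : ∀ x ∈ Ioo a b, HasDerivAt f (f' x) x)
    (hf' : ∀ x ∈ Ioo a b, HasDerivAt (fun s => s * f' s) (-(x * ((c - 1 / x ^ 2) * f x))) x)
    (hu : ∀ x ∈ Ioo a b, HasDerivAt u (u' x) x)
    (hu' : ∀ x ∈ Ioo a b, HasDerivAt (fun s => s * u' s) (-(x * (c * u x))) x) :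
    ∃ C, ∀ x ∈ Ioo a b,
      radialWronskian f f' (fun s => -u' s) (fun s => c * u s + u' s / s) x = C := by
  have hW : ∀ x ∈ Ioo a b, HasDerivAt
      (radialWronskian f f' (fun s => -u' s) (fun s => c * u s + u' s / s)) 0 x := by
    intro x hx
    have hx0 : x ≠ 0 := (ha.trans_lt hx.1).ne'
    exact hasDerivAt_radialWronskian (hf x hx) (hasDerivAt_neg_deriv_of_radial hx0 (hu' x hx))
      (hf' x hx) (hasDerivAt_mul_deriv_neg_deriv_of_radial hx0 (hu x hx) (hu' x hx))
  exact isOpen_Ioo.exists_is_const_of_deriv_eq_zero isPreconnected_Ioo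
    (fun x hx => (hW x hx).differentiableAt.differentiableWithinAt) (fun x hx => (hW x hx).deriv)

lemma abs_le_mul_of_radial {u u' : ℝ → ℝ} {c M r : ℝ} (hr : 0 < r)
    (hcont : ContinuousOn u' (Icc 0 r))
    (hode : ∀ s ∈ Ioo 0 r, HasDerivAt (fun s => s * u' s) (-(s * (c * u s))) s)
    (hM : ∀ s ∈ Ioo 0 r, |u s| ≤ M) : |u' r| ≤ |c| * M * r := by
  obtain ⟨ξ, hξ, hslope⟩ := exists_hasDerivAt_eq_slope (fun s => s * u' s)
    (fun s => -(s * (c * u s))) hr (continuousOn_id.mul hcont) hode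
  have hu'r : u' r = -(ξ * (c * u ξ)) := by
    rw [hslope, zero_mul, sub_zero, sub_zero, mul_div_cancel_left₀ _ hr.ne']
  have hM' : |c| * |u ξ| ≤ |c| * M := mul_le_mul_of_nonneg_left (hM ξ hξ) (abs_nonneg c)
  calc |u' r| = ξ * (|c| * |u ξ|) := by
        rw [hu'r, abs_neg, abs_mul, abs_mul, abs_of_pos hξ.1]
    _ ≤ r * (|c| * M) := mul_le_mul hξ.2.le hM' (by positivity) hr.le
    _ = |c| * M * r := by ring

lemma tendsto_atBot_of_div_sq_le_deriv {f f' : ℝ → ℝ} {c : ℝ} (hc : 0 < c)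
    (hf : ∀ᶠ x in 𝓝[>] 0, HasDerivAt f (f' x) x ∧ c / x ^ 2 ≤ f' x) :
    Tendsto f (𝓝[>] 0) atBot := by
  obtain ⟨δ, hδ, hsub⟩ := mem_nhdsGT_iff_exists_Ioo_subset.mp hf
  have hb : δ / 2 ∈ Ioo 0 δ := ⟨half_pos hδ, half_lt_self hδ⟩
  have hmono : MonotoneOn (fun x => f x + c * x⁻¹) (Ioo 0 δ) := by
    have hd : ∀ x ∈ Ioo 0 δ,
        HasDerivAt (fun x => f x + c * x⁻¹) (f' x + c * -(x ^ 2)⁻¹) x := fun x hx =>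
      (hsub hx).1.add ((hasDerivAt_inv hx.1.ne').const_mul c)
    refine monotoneOn_of_hasDerivWithinAt_nonneg (f' := fun x => f' x + c * -(x ^ 2)⁻¹)
      (convex_Ioo 0 δ) (fun x hx => (hd x hx).continuousAt.continuousWithinAt)
      (fun x hx => ?_) (fun x hx => ?_)
    · rw [interior_Ioo] at hx ⊢
      exact (hd x hx).hasDerivWithinAt
    · rw [interior_Ioo] at hx
      have := (hsub hx).2
      rw [div_eq_mul_inv] at this
      linarith
  have hbound : ∀ᶠ x in 𝓝[>] 0, f x ≤ f (δ / 2) + c * (δ / 2)⁻¹ + -(c * x⁻¹) := by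
    filter_upwards [Ioo_mem_nhdsGT hb.1] with x hx
    have := hmono ⟨hx.1, hx.2.trans hb.2⟩ hb hx.2.le
    simp only at this
    linarith
  exact tendsto_atBot_mono' _ hbound (tendsto_atBot_add_const_left _ _
    (tendsto_neg_atTop_atBot.comp (tendsto_inv_nhdsGT_zero.const_mul_atTop hc)))

lemma nonpos_of_tendsto_mul_deriv_mul {f f' g : ℝ → ℝ} {K C L : ℝ}
    (hf : Tendsto f (𝓝[>] 0) (𝓝 L)) (hd : ∀ᶠ x in 𝓝[>] 0, HasDerivAt f (f' x) x)
    (hg : ∀ᶠ x in 𝓝[>] 0, 0 < g x ∧ g x ≤ K * x)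
    (hlim : Tendsto (fun x => x * f' x * g x) (𝓝[>] 0) (𝓝 C)) : C ≤ 0 := by
  by_contra! hC
  obtain ⟨x, ⟨hgx, hgK⟩, hx⟩ := (hg.and self_mem_nhdsWithin).exists
  have hK : 0 < K := pos_of_mul_pos_left (hgx.trans_le hgK) (le_of_lt hx)
  refine not_tendsto_nhds_of_tendsto_atBot (tendsto_atBot_of_div_sq_le_deriv (f' := f')
    (div_pos (half_pos hC) hK) ?_) L hf
  filter_upwards [hd, hg, hlim.eventually (lt_mem_nhds (half_lt_self hC)), self_mem_nhdsWithin]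
    with x hdx ⟨hgx, hgK⟩ hlt (hx : 0 < x)
  refine ⟨hdx, ?_⟩
  rw [div_div, div_le_iff₀ (by positivity)]
  have : 0 < f' x := by
    by_contra! h
    linarith [mul_nonpos_of_nonpos_of_nonneg (mul_nonpos_of_nonneg_of_nonpos hx.le h) hgx.le]
  nlinarith [mul_le_mul_of_nonneg_left hgK (mul_pos hx this).le]

lemma eq_zero_of_tendsto_mul_deriv_mul {f f' g : ℝ → ℝ} {K C L : ℝ}
    (hf : Tendsto f (𝓝[>] 0) (𝓝 L)) (hd : ∀ᶠ x in 𝓝[>] 0, HasDerivAt f (f' x) x)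
    (hg : ∀ᶠ x in 𝓝[>] 0, 0 < g x ∧ g x ≤ K * x)
    (hlim : Tendsto (fun x => x * f' x * g x) (𝓝[>] 0) (𝓝 C)) : C = 0 := by
  have hneg : -C ≤ 0 := nonpos_of_tendsto_mul_deriv_mul (f' := fun x => -f' x) hf.neg
    (hd.mono fun x hx => hx.neg) hg (by simpa using hlim.neg)
  linarith [nonpos_of_tendsto_mul_deriv_mul hf hd hg hlim]

lemma HasDerivWithinAt.eq_of_tendsto_deriv_Ioi {f f' : ℝ → ℝ} {a d e : ℝ}
    (hf : HasDerivWithinAt f d (Ioi a) a) (hd : ∀ᶠ x in 𝓝[>] a, HasDerivAt f (f' x) x)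
    (hlim : Tendsto f' (𝓝[>] a) (𝓝 e)) : d = e := by
  have he := hasDerivWithinAt_Ici_of_tendsto_deriv (s := {x | HasDerivAt f (f' x) x} ∩ Ioi a)
    (fun x hx => hx.1.differentiableAt.differentiableWithinAt)
    (hf.continuousWithinAt.mono inter_subset_right) (inter_mem hd self_mem_nhdsWithin)
    (hlim.congr' (hd.mono fun x hx => hx.deriv.symm))
  exact (uniqueDiffWithinAt_Ioi a).eq_deriv _ hf (he.mono Ioi_subset_Ici_self)

lemma HasDerivWithinAt.eq_of_tendsto_deriv_Iio {f f' : ℝ → ℝ} {a d e : ℝ}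
    (hf : HasDerivWithinAt f d (Iio a) a) (hd : ∀ᶠ x in 𝓝[<] a, HasDerivAt f (f' x) x)
    (hlim : Tendsto f' (𝓝[<] a) (𝓝 e)) : d = e := by
  have he := hasDerivWithinAt_Iic_of_tendsto_deriv (s := {x | HasDerivAt f (f' x) x} ∩ Iio a)
    (fun x hx => hx.1.differentiableAt.differentiableWithinAt)
    (hf.continuousWithinAt.mono inter_subset_right) (inter_mem hd self_mem_nhdsWithin)
    (hlim.congr' (hd.mono fun x hx => hx.deriv.symm))
  exact (uniqueDiffWithinAt_Iio a).eq_deriv _ hf (he.mono Iio_subset_Iic_self)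

lemma tendsto_of_radialWronskian_eq {f f' g g' : ℝ → ℝ} {l : Filter ℝ} {a C : ℝ}
    (hl : l ≤ 𝓝 a) (ha : a ≠ 0) (hW : ∀ᶠ x in l, radialWronskian f f' g g' x = C)
    (hf : ContinuousAt f a) (hg : ContinuousAt g a) (hg' : ContinuousAt g' a) (hga : g a ≠ 0) :
    Tendsto f' l (𝓝 ((C / a + f a * g' a) / g a)) := by
  have hF : ContinuousAt (fun x => (C / x + f x * g' x) / g x) a :=
    ((continuousAt_const.div continuousAt_id ha).add (hf.mul hg')).div hg hga
  refine (hF.tendsto.mono_left hl).congr' ?_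
  filter_upwards [hW, hl (eventually_ne_nhds ha), hl (hg.eventually_ne hga)] with x hWx hx hgx
  rw [← hWx, radialWronskian]
  field_simp
  ring

lemma radialWronskian_eq_of_hasDerivWithinAt_Iio {f f' g g' : ℝ → ℝ} {a d C : ℝ}
    (ha : a ≠ 0) (hfd : HasDerivWithinAt f d (Iio a) a)
    (hd : ∀ᶠ x in 𝓝[<] a, HasDerivAt f (f' x) x)
    (hW : ∀ᶠ x in 𝓝[<] a, radialWronskian f f' g g' x = C)
    (hf : ContinuousAt f a) (hg : ContinuousAt g a) (hg' : ContinuousAt g' a) (hga : g a ≠ 0) :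
    C = a * (d * g a - f a * g' a) := by
  rw [hfd.eq_of_tendsto_deriv_Iio hd
    (tendsto_of_radialWronskian_eq nhdsWithin_le_nhds ha hW hf hg hg' hga)]
  field_simp
  ring

lemma radialWronskian_eq_of_hasDerivWithinAt_Ioi {f f' g g' : ℝ → ℝ} {a d C : ℝ}
    (ha : a ≠ 0) (hfd : HasDerivWithinAt f d (Ioi a) a)
    (hd : ∀ᶠ x in 𝓝[>] a, HasDerivAt f (f' x) x)
    (hW : ∀ᶠ x in 𝓝[>] a, radialWronskian f f' g g' x = C)
    (hf : ContinuousAt f a) (hg : ContinuousAt g a) (hg' : ContinuousAt g' a) (hga : g a ≠ 0) :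
    C = a * (d * g a - f a * g' a) := by
  rw [hfd.eq_of_tendsto_deriv_Ioi hd
    (tendsto_of_radialWronskian_eq nhdsWithin_le_nhds ha hW hf hg hg' hga)]
  field_simp
  ring

lemma div_le_div_of_radialWronskian_nonneg {f f' g g' : ℝ → ℝ} {a b : ℝ} (ha : 0 ≤ a)
    (hab : a ≤ b) (hf : ContinuousOn f (Icc a b)) (hg : ContinuousOn g (Icc a b))
    (hg0 : ∀ x ∈ Icc a b, g x ≠ 0) (hfd : ∀ x ∈ Ioo a b, HasDerivAt f (f' x) x)
    (hgd : ∀ x ∈ Ioo a b, HasDerivAt g (g' x) x)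
    (hW : ∀ x ∈ Ioo a b, 0 ≤ radialWronskian f f' g g' x) : f a / g a ≤ f b / g b := by
  refine monotoneOn_of_hasDerivWithinAt_nonneg
    (f' := fun x => (f' x * g x - f x * g' x) / g x ^ 2) (convex_Icc a b) (hf.div hg hg0)
    (fun x hx => ?_) (fun x hx => ?_) (left_mem_Icc.2 hab) (right_mem_Icc.2 hab) hab
  · rw [interior_Icc] at hx ⊢
    exact ((hfd x hx).div (hgd x hx) (hg0 x (Ioo_subset_Icc_self hx))).hasDerivWithinAt
  · rw [interior_Icc] at hx
    exact div_nonneg ((mul_nonneg_iff_of_pos_left (ha.trans_lt hx.1)).mp (hW x hx)) (sq_nonneg _)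

lemma ContinuousOn.tendsto_nhdsGT_of_Icc {f : ℝ → ℝ} {a b : ℝ}
    (hf : ContinuousOn f (Icc a b)) (hab : a < b) : Tendsto f (𝓝[>] a) (𝓝 (f a)) :=
  ((hf a (left_mem_Icc.2 hab.le)).mono_of_mem_nhdsWithin (Icc_mem_nhdsGT hab)).tendsto

namespace EigenProfile

variable {R rs lam : ℝ} {u u' : ℝ → ℝ}

lemma hasDerivAt (hu : EigenProfile R rs lam u u') {r : ℝ} (hr : r ∈ Ioo 0 R) :
    HasDerivAt u (u' r) r :=
  (hu.deriv r (Ioo_subset_Icc_self hr)).hasDerivAt (Icc_mem_nhds hr.1 hr.2)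

lemma ode_of_lt (hu : EigenProfile R rs lam u u') (hrsR : rs ≤ R) {r : ℝ}
    (hr : r ∈ Ioo 0 rs) :
    HasDerivAt (fun s => s * u' s) (-(r * ((lam + 1) * u r))) r := by
  simpa [hr.2] using hu.ode r ⟨hr.1, hr.2.trans_le hrsR⟩ hr.2.ne

lemma ode_of_gt (hu : EigenProfile R rs lam u u') (hrs : 0 ≤ rs) {r : ℝ} (hr : r ∈ Ioo rs R) :
    HasDerivAt (fun s => s * u' s) (-(r * (lam * u r))) r := by
  simpa [hr.1.not_gt] using hu.ode r ⟨hrs.trans_lt hr.1, hr.2⟩ hr.1.ne'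

lemma exists_neg_deriv_le_mul (hu : EigenProfile R rs lam u u') (hrs : 0 < rs) (hrsR : rs ≤ R) :
    ∃ K, ∀ᶠ r in 𝓝[>] 0, 0 < -u' r ∧ -u' r ≤ K * r := by
  obtain ⟨M, hM⟩ := isCompact_Icc.exists_bound_of_continuousOn hu.cont
  refine ⟨|lam + 1| * M, ?_⟩
  filter_upwards [Ioo_mem_nhdsGT hrs] with r hr
  have hrR : r < R := hr.2.trans_le hrsR
  refine ⟨neg_pos.2 (hu.derivNeg r ⟨hr.1, hrR.le⟩), (neg_le_abs _).trans ?_⟩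
  exact abs_le_mul_of_radial hr.1 (hu.derivCont.mono (Icc_subset_Icc le_rfl hrR.le))
    (fun s hs => hu.ode_of_lt hrsR ⟨hs.1, hs.2.trans hr.2⟩)
    (fun s hs => hM s ⟨hs.1.le, (hs.2.trans hrR).le⟩)

end EigenProfile

namespace PsiProfile

variable {R rs lam : ℝ} {u u' : ℝ → ℝ} {k : ℕ} {ψ ψ' : ℝ → ℝ} {dp dm : ℝ}

lemma ode_of_lt (hψ : PsiProfile R rs lam u k ψ ψ' dp dm) (hrsR : rs ≤ R) {r : ℝ}
    (hr : r ∈ Ioo 0 rs) :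
    HasDerivAt (fun s => s * ψ' s) (-(r * ((lam + 1 - (k : ℝ) ^ 2 / r ^ 2) * ψ r))) r := by
  simpa [hr.2] using hψ.ode r ⟨hr.1, hr.2.trans_le hrsR⟩ hr.2.ne

lemma ode_of_gt (hψ : PsiProfile R rs lam u k ψ ψ' dp dm) (hrs : 0 ≤ rs) {r : ℝ}
    (hr : r ∈ Ioo rs R) :
    HasDerivAt (fun s => s * ψ' s) (-(r * ((lam - (k : ℝ) ^ 2 / r ^ 2) * ψ r))) r := by
  simpa [hr.1.not_gt] using hψ.ode r ⟨hrs.trans_lt hr.1, hr.2⟩ hr.1.ne'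

lemma eq_zero_of_radialWronskian_eq (hψ : PsiProfile R rs lam u k ψ ψ' dp dm)
    (hu : EigenProfile R rs lam u u') (hR : 0 < R) (hrs : 0 < rs) (hrsR : rs ≤ R) {C : ℝ}
    (hC : ∀ x ∈ Ioo 0 rs,
      radialWronskian ψ ψ' (fun s => -u' s) (fun s => (lam + 1) * u s + u' s / s) x = C) :
    C = 0 := by
  obtain ⟨K, hK⟩ := hu.exists_neg_deriv_le_mul hrs hrsR
  have hψ0 := hψ.cont.tendsto_nhdsGT_of_Icc hR
  have hu0 := hu.cont.tendsto_nhdsGT_of_Icc hR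
  have hu'0 := hu.derivCont.tendsto_nhdsGT_of_Icc hR
  rw [hψ.val0] at hψ0
  rw [hu.deriv0] at hu'0
  refine eq_zero_of_tendsto_mul_deriv_mul (f' := ψ') hψ0 ?_ hK ?_
  · filter_upwards [Ioo_mem_nhdsGT hrs] with x hx
    exact hψ.deriv x ⟨hx.1, hx.2.trans_le hrsR⟩ hx.2.ne
  · have hlim : Tendsto (fun x => C + ψ x * (x * ((lam + 1) * u x) + u' x)) (𝓝[>] 0)
        (𝓝 (C + 0 * (0 * ((lam + 1) * u 0) + 0))) :=
      tendsto_const_nhds.add (hψ0.mul ((tendsto_nhdsWithin_of_tendsto_nhds tendsto_id).mul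
        (hu0.const_mul _) |>.add hu'0))
    rw [zero_mul, add_zero] at hlim
    refine hlim.congr' ?_
    filter_upwards [Ioo_mem_nhdsGT hrs] with x hx
    have hx0 : x ≠ 0 := hx.1.ne'
    rw [← hC x hx, radialWronskian]
    field_simp
    ring

lemma exists_radialWronskian_eq_of_lt (hψ : PsiProfile R rs lam u 1 ψ ψ' dp dm)
    (hu : EigenProfile R rs lam u u') (hrsR : rs < R) :
    ∃ C, ∀ x ∈ Ioo 0 rs,
      radialWronskian ψ ψ' (fun s => -u' s) (fun s => (lam + 1) * u s + u' s / s) x = C :=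
  exists_radialWronskian_eq le_rfl (fun x hx => hψ.deriv x ⟨hx.1, hx.2.trans hrsR⟩ hx.2.ne)
    (fun x hx => by simpa using hψ.ode_of_lt hrsR.le hx)
    (fun x hx => hu.hasDerivAt ⟨hx.1, hx.2.trans hrsR⟩) (fun x hx => hu.ode_of_lt hrsR.le hx)

lemma exists_radialWronskian_eq_of_gt (hψ : PsiProfile R rs lam u 1 ψ ψ' dp dm)
    (hu : EigenProfile R rs lam u u') (hrs : 0 < rs) :
    ∃ C, ∀ x ∈ Ioo rs R,
      radialWronskian ψ ψ' (fun s => -u' s) (fun s => lam * u s + u' s / s) x = C :=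
  exists_radialWronskian_eq hrs.le (fun x hx => hψ.deriv x ⟨hrs.trans hx.1, hx.2⟩ hx.1.ne')
    (fun x hx => by simpa using hψ.ode_of_gt hrs.le hx)
    (fun x hx => hu.hasDerivAt ⟨hrs.trans hx.1, hx.2⟩) (fun x hx => hu.ode_of_gt hrs.le hx)

lemma radialWronskian_jump (hψ : PsiProfile R rs lam u k ψ ψ' dp dm)
    (hu : EigenProfile R rs lam u u') (hrs : 0 < rs) (hrsR : rs < R) {CL CR : ℝ}
    (hCL : ∀ x ∈ Ioo 0 rs,
      radialWronskian ψ ψ' (fun s => -u' s) (fun s => (lam + 1) * u s + u' s / s) x = CL)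
    (hCR : ∀ x ∈ Ioo rs R,
      radialWronskian ψ ψ' (fun s => -u' s) (fun s => lam * u s + u' s / s) x = CR) :
    CR - CL = rs * u rs * (ψ rs - -u' rs) := by
  have hrsNhds : Icc 0 R ∈ 𝓝 rs := Icc_mem_nhds hrs hrsR
  have hψc := hψ.cont.continuousAt hrsNhds
  have huc := hu.cont.continuousAt hrsNhds
  have hu'c := hu.derivCont.continuousAt hrsNhds
  have hv : -u' rs ≠ 0 := (neg_pos.2 (hu.derivNeg rs ⟨hrs, hrsR.le⟩)).ne'
  have hw : ∀ c : ℝ, ContinuousAt (fun s => c * u s + u' s / s) rs := fun c =>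
    (continuousAt_const.mul huc).add (hu'c.div continuousAt_id hrs.ne')
  have hL := radialWronskian_eq_of_hasDerivWithinAt_Iio (g := fun s => -u' s)
    (g' := fun s => (lam + 1) * u s + u' s / s) hrs.ne' hψ.jumpMinus
    (by filter_upwards [Ioo_mem_nhdsLT hrs] with x hx
        using hψ.deriv x ⟨hx.1, hx.2.trans hrsR⟩ hx.2.ne)
    (by filter_upwards [Ioo_mem_nhdsLT hrs] with x hx using hCL x hx) hψc hu'c.neg
    (hw _) hv
  have hR := radialWronskian_eq_of_hasDerivWithinAt_Ioi (g := fun s => -u' s)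
    (g' := fun s => lam * u s + u' s / s) hrs.ne' hψ.jumpPlus
    (by filter_upwards [Ioo_mem_nhdsGT hrsR] with x hx
        using hψ.deriv x ⟨hrs.trans hx.1, hx.2⟩ hx.1.ne')
    (by filter_upwards [Ioo_mem_nhdsGT hrsR] with x hx using hCR x hx) hψc hu'c.neg
    (hw _) hv
  linear_combination hR - hL + (rs * -u' rs) * hψ.jump

lemma nonpos_of_radialWronskian_nonneg (hψ : PsiProfile R rs lam u k ψ ψ' dp dm)
    (hu : EigenProfile R rs lam u u') (hrs : 0 < rs) (hrsR : rs < R) {C : ℝ} (hC : 0 ≤ C)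
    (hCR : ∀ x ∈ Ioo rs R,
      radialWronskian ψ ψ' (fun s => -u' s) (fun s => lam * u s + u' s / s) x = C) :
    ψ rs ≤ 0 := by
  have hv : ∀ x ∈ Icc rs R, 0 < -u' x := fun x hx =>
    neg_pos.2 (hu.derivNeg x ⟨hrs.trans_le hx.1, hx.2⟩)
  have hmono := div_le_div_of_radialWronskian_nonneg (g := fun s => -u' s)
    (g' := fun s => lam * u s + u' s / s) hrs.le hrsR.le
    (hψ.cont.mono (Icc_subset_Icc hrs.le le_rfl))
    (hu.derivCont.neg.mono (Icc_subset_Icc hrs.le le_rfl)) (fun x hx => (hv x hx).ne')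
    (fun x hx => hψ.deriv x ⟨hrs.trans hx.1, hx.2⟩ hx.1.ne')
    (fun x hx => hasDerivAt_neg_deriv_of_radial (hrs.trans hx.1).ne' (hu.ode_of_gt hrs.le hx))
    (fun x hx => (hCR x hx).symm ▸ hC)
  rwa [hψ.valR, zero_div, div_le_iff₀ (hv rs (left_mem_Icc.2 hrsR.le)), zero_mul] at hmono

end PsiProfile

/-- `ω₁ > 0`, where `ω₁ = -u'(r*) - ψ₁(r*)`; equivalently
`ψ₁(r*) < -u'(r*)`. -/
theorem omega_one_pos
    (R rs lam : ℝ) (hR : 0 < R) (hrs : 0 < rs) (hrsR : rs < R)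
    (u u' : ℝ → ℝ) (hu : EigenProfile R rs lam u u')
    (ψ₁ ψ₁' : ℝ → ℝ) (dp₁ dm₁ : ℝ)
    (hψ₁ : PsiProfile R rs lam u 1 ψ₁ ψ₁' dp₁ dm₁) :
    0 < -(u' rs) - ψ₁ rs := by
  obtain ⟨CL, hCL⟩ := hψ₁.exists_radialWronskian_eq_of_lt hu hrsR
  obtain ⟨CR, hCR⟩ := hψ₁.exists_radialWronskian_eq_of_gt hu hrs
  have hCL0 : CL = 0 := hψ₁.eq_zero_of_radialWronskian_eq hu hR hrs hrsR.le hCL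
  have hjump := hψ₁.radialWronskian_jump hu hrs hrsR hCL hCR
  have hv : 0 < -u' rs := neg_pos.2 (hu.derivNeg rs ⟨hrs, hrsR.le⟩)
  by_contra! hle
  have hCR0 : 0 ≤ CR := by
    rw [hCL0, sub_zero] at hjump
    rw [hjump]
    exact mul_nonneg (mul_nonneg hrs.le (hu.pos rs ⟨hrs.le, hrsR⟩).le) (by linarith)
  linarith [hψ₁.nonpos_of_radialWronskian_nonneg hu hrs hrsR hCR0 hCR]

end
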